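/- There exists a single polynomial p with natural-number (or integer) coefficients such that for every n ≥ 2 and every element w of the free group F_n, there is an automorphism α of F_n and an index i ∈ {1,…,n} such that the exponent sum of the generator x_i in α(w) is zero and ℓ(α(w)) ≤ p(ℓ(w)). That is, the polynomial in the main theorem can be chosen universally, independently of the rank n. -/

import Mathlib

/-- The exponent-sum homomorphism `F_n → ℤ` (written multiplicatively) sending the
generator `x_i` to `1` and all other generators to `0`. -/
def expSum {n : ℕ} (i : Fin n) : FreeGroup (Fin n) →* Multiplicative ℤ :=
  FreeGroup.lift fun j => Multiplicative.ofAdd (if j = i then (1 : ℤ) else 0)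

/-!
Run the Euclidean algorithm on the exponent sums `(a, b)` of two generators `x_i, x_j`,
realising each division step `b ↦ b + k a` by the transvection `x_i ↦ x_i x_j ^ k` and
then exchanging the roles of `i` and `j`. A transvection multiplies lengths by at most
`|k| + 1`, and a division step with remainder `r` satisfies `(|r| + 1)(|k| + 1) ≤ |b| + 1`,
so the invariant `ℓ(α w) ≤ (|a| + 1)(|b| + 1) ℓ(w)` survives each step. When the algorithm
stops, one exponent sum vanishes, and `|a|, |b| ≤ ℓ(w)` gives the bound `ℓ(w) (ℓ(w) + 1)²`.
-/

theorem Int.exists_natAbs_add_mul_lt {a : ℤ} (ha : a ≠ 0) (b : ℤ) :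
    ∃ k : ℤ, (b + k * a).natAbs < a.natAbs ∧
      ((b + k * a).natAbs + 1) * (k.natAbs + 1) ≤ b.natAbs + 1 := by
  refine ⟨-b.tdiv a, ?_⟩
  have hmod : b + -b.tdiv a * a = b.tmod a := by rw [Int.tmod_def]; ring
  rw [hmod, Int.natAbs_tmod, Int.natAbs_neg, Int.natAbs_tdiv]
  have hA : 0 < a.natAbs := Int.natAbs_pos.mpr ha
  have hdiv := Nat.div_add_mod b.natAbs a.natAbs
  have hlt := Nat.mod_lt b.natAbs hA
  refine ⟨hlt, ?_⟩
  change (b.natAbs % a.natAbs + 1) * (b.natAbs / a.natAbs + 1) ≤ b.natAbs + 1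
  nlinarith [Nat.mul_le_mul_right (b.natAbs / a.natAbs) hlt]

namespace FreeGroup

variable {α : Type*} [DecidableEq α]

theorem le_mul_norm_of_map {G : Type*} [Group G] (N : G → ℕ) (hN_one : N 1 = 0)
    (hN_mul : ∀ g h, N (g * h) ≤ N g + N h) (hN_inv : ∀ g, N g⁻¹ = N g)
    (φ : FreeGroup α →* G) {C : ℕ} (hC : ∀ a, N (φ (of a)) ≤ C) (w : FreeGroup α) :
    N (φ w) ≤ C * w.norm := by
  suffices ∀ L : List (α × Bool), N (φ (mk L)) ≤ C * L.length by
    have := this w.toWord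
    rwa [mk_toWord] at this
  intro L
  induction L with
  | nil => simp [← one_eq_mk, hN_one]
  | cons p L ih =>
    obtain ⟨a, b⟩ := p
    have hletter : N (φ (mk [(a, b)])) ≤ C := by
      cases b
      · have : mk [(a, false)] = (of a)⁻¹ := by simp [of, inv_mk, invRev]
        rw [this, _root_.map_inv, hN_inv]
        exact hC a
      · exact hC a
    calc N (φ (mk ((a, b) :: L))) = N (φ (mk [(a, b)]) * φ (mk L)) := by
          rw [← _root_.map_mul, mul_mk, List.singleton_append]
      _ ≤ C + C * L.length := (hN_mul _ _).trans (Nat.add_le_add hletter ih)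
      _ = C * ((a, b) :: L).length := by rw [List.length_cons]; ring

theorem norm_of_zpow (a : α) (k : ℤ) : (of a ^ k).norm = k.natAbs := by
  cases k with
  | ofNat m => simp
  | negSucc m => rw [zpow_negSucc, norm_inv_eq, norm_of_pow]; rfl

def transvection (i j : α) (k : ℤ) : FreeGroup α →* FreeGroup α :=
  lift fun l => if l = i then of i * of j ^ k else of l

theorem transvection_of (i j : α) (k : ℤ) (l : α) :
    transvection i j k (of l) = if l = i then of i * of j ^ k else of l :=
  lift_apply_of

theorem transvection_neg_comp {i j : α} (hij : i ≠ j) (k : ℤ) :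
    (transvection i j (-k)).comp (transvection i j k) = MonoidHom.id _ := by
  refine ext_hom _ _ fun l => ?_
  by_cases hl : l = i
  · subst hl
    simp [transvection_of, hij.symm, mul_assoc]
  · simp [transvection_of, hl]

def transvectionEquiv {i j : α} (hij : i ≠ j) (k : ℤ) : FreeGroup α ≃* FreeGroup α :=
  (transvection i j k).toMulEquiv (transvection i j (-k)) (transvection_neg_comp hij k)
    (by simpa using transvection_neg_comp hij (-k))

theorem norm_transvection_le (i j : α) (k : ℤ) (w : FreeGroup α) :
    (transvection i j k w).norm ≤ (k.natAbs + 1) * w.norm := by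
  refine le_mul_norm_of_map _ norm_one norm_mul_le (fun _ => norm_inv_eq) _ (fun l => ?_) w
  rw [transvection_of]
  split
  · exact (norm_mul_le _ _).trans (by rw [norm_of, norm_of_zpow, add_comm])
  · simp

end FreeGroup

open FreeGroup

variable {n : ℕ}

theorem natAbs_expSum_le_norm (i : Fin n) (w : FreeGroup (Fin n)) :
    (expSum i w).toAdd.natAbs ≤ w.norm := by
  simpa using le_mul_norm_of_map (fun g : Multiplicative ℤ => g.toAdd.natAbs) rfl
    (fun g h => Int.natAbs_add_le g.toAdd h.toAdd) (fun g => Int.natAbs_neg g.toAdd) (expSum i)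
    (C := 1) (fun a => by simp only [expSum, lift_apply_of]; split <;> simp) w

theorem expSum_transvection (i j l : Fin n) (k : ℤ) (w : FreeGroup (Fin n)) :
    (expSum l (transvection i j k w)).toAdd
      = (expSum l w).toAdd + (if l = j then k else 0) * (expSum i w).toAdd := by
  suffices (expSum l).comp (transvection i j k)
      = expSum l * expSum i ^ (if l = j then k else 0) by
    rw [← MonoidHom.comp_apply, this, MonoidHom.mul_apply, MonoidHom.zpow_apply, toAdd_mul,
      toAdd_zpow, smul_eq_mul]
  refine ext_hom _ _ fun m => ?_
  simp only [MonoidHom.comp_apply, transvection_of, MonoidHom.mul_apply, MonoidHom.zpow_apply]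
  split_ifs <;> simp_all [expSum, eq_comm]

theorem exists_expSum_eq_one_of_ne {i j : Fin n} (hij : i ≠ j) (w : FreeGroup (Fin n)) :
    ∃ (α : FreeGroup (Fin n) ≃* FreeGroup (Fin n)) (l : Fin n), expSum l (α w) = 1 ∧
      (α w).norm ≤ ((expSum i w).toAdd.natAbs + 1) * ((expSum j w).toAdd.natAbs + 1) * w.norm := by
  by_cases hi : expSum i w = 1
  · refine ⟨MulEquiv.refl _, i, hi, ?_⟩
    simp only [hi, toAdd_one, Int.natAbs_zero, zero_add, one_mul, MulEquiv.refl_apply]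
    exact Nat.le_mul_of_pos_left _ (Nat.succ_pos _)
  set a := (expSum i w).toAdd
  set b := (expSum j w).toAdd
  have ha : a ≠ 0 := fun h => hi (toAdd_eq_zero.mp h)
  obtain ⟨k, hlt, hstep⟩ := Int.exists_natAbs_add_mul_lt ha b
  set w' := transvection i j k w
  have hi' : (expSum i w').toAdd = a := by simp [w', a, expSum_transvection, hij]
  have hj' : (expSum j w').toAdd = b + k * a := by simp [w', expSum_transvection, a, b]
  have hdecr : (expSum j w').toAdd.natAbs < (expSum i w).toAdd.natAbs := hj' ▸ hlt
  obtain ⟨α, l, hl, hnorm⟩ := exists_expSum_eq_one_of_ne hij.symm w'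
  refine ⟨(transvectionEquiv hij k).trans α, l, hl, ?_⟩
  calc (α w').norm ≤ ((b + k * a).natAbs + 1) * (a.natAbs + 1) * w'.norm := by
        rwa [hi', hj'] at hnorm
    _ ≤ ((b + k * a).natAbs + 1) * (a.natAbs + 1) * ((k.natAbs + 1) * w.norm) := by
        gcongr; exact norm_transvection_le i j k w
    _ = ((b + k * a).natAbs + 1) * (k.natAbs + 1) * (a.natAbs + 1) * w.norm := by ring
    _ ≤ (b.natAbs + 1) * (a.natAbs + 1) * w.norm := by gcongr
    _ = (a.natAbs + 1) * (b.natAbs + 1) * w.norm := by ring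
termination_by (expSum i w).toAdd.natAbs

/-- There is a single polynomial `p`, independent of the rank `n`, such that for every
`n ≥ 2` and every `w ∈ F_n` some automorphism of `F_n` carries `w` to a word with zero
exponent sum in some generator and of length at most `p(ℓ(w))`. -/
theorem exists_universal_poly_automorphism_zero_expSum :
    ∃ p : Polynomial ℕ, ∀ n : ℕ, 2 ≤ n → ∀ w : FreeGroup (Fin n),
      ∃ (α : FreeGroup (Fin n) ≃* FreeGroup (Fin n)) (i : Fin n),
        expSum i (α w) = 1 ∧ (α w).norm ≤ p.eval w.norm := by
  refine ⟨Polynomial.X * (Polynomial.X + 1) ^ 2, fun n hn w => ?_⟩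
  have h01 : (⟨0, by omega⟩ : Fin n) ≠ ⟨1, by omega⟩ := by simp
  obtain ⟨α, i, hi, hnorm⟩ := exists_expSum_eq_one_of_ne h01 w
  refine ⟨α, i, hi, hnorm.trans ?_⟩
  have h0 := natAbs_expSum_le_norm ⟨0, by omega⟩ w
  have h1 := natAbs_expSum_le_norm ⟨1, by omega⟩ w
  simp only [Polynomial.eval_mul, Polynomial.eval_pow, Polynomial.eval_add, Polynomial.eval_X,
    Polynomial.eval_one]
  calc _ ≤ (w.norm + 1) * (w.norm + 1) * w.norm := by gcongr
    _ = w.norm * (w.norm + 1) ^ 2 := by ring
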